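/- If T is a μ-skeleton, then μ ≤ |I_0(X_T)|^ω, where I_0(X_T) is the set of isolated points of the associated space X_T. In particular, under CH (2^ω = ω_1), a ⟨ω_1⟩_{ω_2}⌢⟨λ⟩-poset cannot be an ω_2-skeleton. -/

import Mathlib

open Cardinal

/-- The underlying set of an `s`-poset for `s = ⟨κ_α : α < δ⟩`. -/
def SCarrier (δ : Ordinal.{0}) (κ : Ordinal.{0} → Cardinal.{0}) : Type 1 :=
  {p : Ordinal × Ordinal // p.1 < δ ∧ p.2 < (κ p.1).ord}

/-- An `s`-poset for the sequence `s = ⟨κ_α : α < δ⟩` (Bagaria). -/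
structure SPoset (δ : Ordinal.{0}) (κ : Ordinal.{0} → Cardinal.{0}) : Type 1 where
  le : SCarrier δ κ → SCarrier δ κ → Prop
  le_refl : ∀ s, le s s
  le_antisymm : ∀ s t, le s t → le t s → s = t
  le_trans : ∀ s t u, le s t → le t u → le s u
  lt_levels : ∀ s t, le s t → s ≠ t → s.1.1 < t.1.1
  inf : ∀ s t : SCarrier δ κ, s ≠ t → ∃ F : Finset (SCarrier δ κ),
    ∀ u, (le u s ∧ le u t) ↔ ∃ v ∈ F, le u v
  pred_infinite : ∀ α β : Ordinal, α < β → β < δ → ∀ t : SCarrier δ κ, t.1.1 = β →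
    {s : SCarrier δ κ | s.1.1 = α ∧ le s t ∧ s ≠ t}.Infinite

/-- `U(x) = {y : y ⪯ x}`. -/
def SPoset.U {δ : Ordinal.{0}} {κ : Ordinal.{0} → Cardinal.{0}} (T : SPoset δ κ)
    (x : SCarrier δ κ) : Set (SCarrier δ κ) :=
  {y | T.le y x}

/-- The topology on `T` generated by the subbase `{U(x), T \ U(x) : x ∈ T}`. -/
def SPoset.topology {δ : Ordinal.{0}} {κ : Ordinal.{0} → Cardinal.{0}} (T : SPoset δ κ) :
    TopologicalSpace (SCarrier δ κ) :=
  TopologicalSpace.generateFrom {S | ∃ x, S = T.U x ∨ S = (T.U x)ᶜ}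

/-- `T_γ` is a bone level: distinct points of level `γ` have no common lower bound
(`i{s,t} = ∅`), and every strict predecessor of a point of level `γ+1` factors
through level `γ`. -/
def SPoset.BoneLevel {δ : Ordinal.{0}} {κ : Ordinal.{0} → Cardinal.{0}}
    (T : SPoset δ κ) (γ : Ordinal.{0}) : Prop :=
  (∀ s t : SCarrier δ κ, s.1.1 = γ → t.1.1 = γ → s ≠ t →
      ∀ u, ¬ (T.le u s ∧ T.le u t)) ∧
  (∀ x : SCarrier δ κ, x.1.1 = γ + 1 → ∀ y, T.le y x → y ≠ x →
      ∃ z : SCarrier δ κ, z.1.1 = γ ∧ T.le y z ∧ T.le z x ∧ z ≠ x)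

/-- The `α`-th Cantor–Bendixson derivative of a topological space. -/
noncomputable def CBDeriv (X : Type 1) (tX : TopologicalSpace X) (o : Ordinal.{0}) :
    Set X :=
  Ordinal.limitRecOn o (Set.univ : Set X)
    (fun _ S => S \ {x | x ∈ S ∧ ∃ U : Set X, tX.IsOpen U ∧ U ∩ S = {x}})
    (fun o _ IH => ⋂ (β : Ordinal) (h : β < o), IH β h)


section Helpers

variable {δ : Ordinal.{0}} {κf : Ordinal.{0} → Cardinal.{0}} (T : SPoset δ κf)

lemma skel_level_le {s t : SCarrier δ κf} (h : T.le s t) : s.1.1 ≤ t.1.1 := by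
  rcases eq_or_ne s t with rfl | hne
  · exact le_rfl
  · exact (T.lt_levels s t h hne).le

lemma skel_isOpen_U (x : SCarrier δ κf) : T.topology.IsOpen (T.U x) :=
  TopologicalSpace.GenerateOpen.basic _ ⟨x, Or.inl rfl⟩

lemma skel_isOpen_Uc (x : SCarrier δ κf) : T.topology.IsOpen (T.U x)ᶜ :=
  TopologicalSpace.GenerateOpen.basic _ ⟨x, Or.inr rfl⟩

lemma skel_t2 : @T2Space (SCarrier δ κf) T.topology := by
  letI := T.topology
  constructor
  intro x y hxy
  by_cases h : T.le x y
  · refine ⟨T.U x, (T.U x)ᶜ, skel_isOpen_U T x, skel_isOpen_Uc T x, T.le_refl x, ?_, ?_⟩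
    · intro hyx
      exact hxy (T.le_antisymm x y h hyx)
    · exact disjoint_compl_right
  · exact ⟨(T.U y)ᶜ, T.U y, skel_isOpen_Uc T y, skel_isOpen_U T y, h, T.le_refl y,
      disjoint_compl_left⟩

lemma skel_bad_finite {γ : Ordinal} (hb : T.BoneLevel γ) {x z : SCarrier δ κf}
    (hxz : ¬ T.le x z) (hx : x.1.1 = γ + 1)
    {s t : ℕ → SCarrier δ κf} (hsinj : Function.Injective s)
    (hsγ : ∀ n, (s n).1.1 = γ) (hsx : ∀ n, T.le (s n) x)
    (hts : ∀ n, T.le (t n) (s n)) :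
    {n : ℕ | T.le (t n) z}.Finite := by
  classical
  have hxz' : x ≠ z := fun h => hxz (h ▸ T.le_refl x)
  obtain ⟨F, hF⟩ := T.inf x z hxz'
  have key : ∀ n ∈ {n : ℕ | T.le (t n) z}, ∃ v ∈ F, T.le v (s n) := by
    intro n hn
    have htx : T.le (t n) x := T.le_trans _ _ _ (hts n) (hsx n)
    obtain ⟨v, hvF, htv⟩ := (hF (t n)).1 ⟨htx, hn⟩
    have hv : T.le v x ∧ T.le v z := (hF v).2 ⟨v, hvF, T.le_refl v⟩
    have hvx : v ≠ x := fun h => hxz (h ▸ hv.2)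
    obtain ⟨w, hwγ, hvw, hwx, hwne⟩ := hb.2 x hx v hv.1 hvx
    have hws : w = s n := by
      by_contra hne
      exact hb.1 w (s n) hwγ (hsγ n) hne (t n) ⟨T.le_trans _ _ _ htv hvw, hts n⟩
    exact ⟨v, hvF, hws ▸ hvw⟩
  have key' : ∀ n : {n : ℕ // T.le (t n) z}, ∃ v, v ∈ F ∧ T.le v (s n.1) :=
    fun n => key n.1 n.2
  choose v hvF hvs using key'
  have hinj : Function.Injective fun n => (⟨v n, hvF n⟩ : {u // u ∈ F}) := by
    intro n m h
    have hv : v n = v m := congrArg Subtype.val h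
    by_contra hne
    have hsnm : s n.1 ≠ s m.1 := fun hh => hne (Subtype.ext (hsinj hh))
    exact hb.1 (s n.1) (s m.1) (hsγ n.1) (hsγ m.1) hsnm (v n) ⟨hvs n, hv ▸ hvs m⟩
  have : Finite {n : ℕ // T.le (t n) z} := Finite.of_injective _ hinj
  exact Set.finite_coe_iff.mp this

lemma skel_exists_tendsto {γ : Ordinal} (hb : T.BoneLevel γ) (x : SCarrier δ κf)
    (hx : x.1.1 = γ + 1) :
    ∃ t : ℕ → SCarrier δ κf, Function.Injective t ∧ (∀ n, (t n).1.1 = 0) ∧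
      Filter.Tendsto t Filter.atTop (@nhds _ T.topology x) := by
  have hγs : γ < γ + 1 := by
    rw [Ordinal.add_one_eq_succ]; exact Order.lt_succ γ
  have hβδ : γ + 1 < δ := hx ▸ x.2.1
  have hP : {s : SCarrier δ κf | s.1.1 = γ ∧ T.le s x ∧ s ≠ x}.Infinite :=
    T.pred_infinite γ (γ + 1) hγs hβδ x hx
  let e := hP.natEmbedding
  set s : ℕ → SCarrier δ κf := fun n => (e n).1 with hs
  have hsinj : Function.Injective s := fun n m h => e.injective (Subtype.ext h)
  have hsγ : ∀ n, (s n).1.1 = γ := fun n => (e n).2.1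
  have hsx : ∀ n, T.le (s n) x := fun n => (e n).2.2.1
  have hT : ∀ n, ∃ u : SCarrier δ κf, u.1.1 = 0 ∧ T.le u (s n) := by
    intro n
    rcases eq_or_ne γ 0 with rfl | hγ
    · exact ⟨s n, hsγ n, T.le_refl _⟩
    · have h0γ : (0 : Ordinal) < γ := pos_iff_ne_zero.2 hγ
      have hγδ : γ < δ := hγs.trans hβδ
      obtain ⟨u, hu⟩ := (T.pred_infinite 0 γ h0γ hγδ (s n) (hsγ n)).nonempty
      exact ⟨u, hu.1, hu.2.1⟩
  choose t ht0 hts using hT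
  have htinj : Function.Injective t := by
    intro n m h
    by_contra hne
    have hsnm : s n ≠ s m := fun hh => hne (hsinj hh)
    exact hb.1 (s n) (s m) (hsγ n) (hsγ m) hsnm (t n) ⟨hts n, h ▸ hts m⟩
  refine ⟨t, htinj, ht0, ?_⟩
  rw [show T.topology = TopologicalSpace.generateFrom
      {S | ∃ y, S = T.U y ∨ S = (T.U y)ᶜ} from rfl,
    TopologicalSpace.tendsto_nhds_generateFrom_iff]
  rintro S ⟨z, rfl | rfl⟩ hxS
  · exact Filter.univ_mem' fun n =>
      T.le_trans _ _ _ (T.le_trans _ _ _ (hts n) (hsx n)) hxS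
  · have hxz : ¬ T.le x z := hxS
    have hfin := skel_bad_finite T hb hxz hx hsinj hsγ hsx hts
    rw [← Nat.cofinite_eq_atTop, Filter.mem_cofinite]
    convert hfin using 1
    ext n
    simp [SPoset.U]

lemma skel_isolated_of_level_zero (x : SCarrier δ κf) (hx : x.1.1 = 0) :
    ∃ U, T.topology.IsOpen U ∧ U ∩ Set.univ = {x} := by
  refine ⟨T.U x, skel_isOpen_U T x, ?_⟩
  rw [Set.inter_univ]
  ext y
  simp only [Set.mem_singleton_iff]
  constructor
  · intro hy
    by_contra h
    have := T.lt_levels y x hy h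
    rw [hx] at this
    exact absurd this (not_lt_of_ge zero_le)
  · rintro rfl; exact T.le_refl _

end Helpers

lemma skel_cb_diff (X : Type 1) (tX : TopologicalSpace X) :
    CBDeriv X tX 0 \ CBDeriv X tX 1 =
      {x | ∃ U, tX.IsOpen U ∧ U ∩ Set.univ = {x}} := by
  have h0 : CBDeriv X tX 0 = Set.univ := by
    unfold CBDeriv; rw [Ordinal.limitRecOn_zero]
  have h1 : CBDeriv X tX 1 = Set.univ \
      {x | x ∈ Set.univ ∧ ∃ U, tX.IsOpen U ∧ U ∩ Set.univ = {x}} := by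
    unfold CBDeriv
    rw [← Ordinal.succ_zero, Ordinal.limitRecOn_succ, Ordinal.limitRecOn_zero]
  rw [h0, h1]
  ext y
  simp
section NotIso
variable {δ : Ordinal.{0}} {κf : Ordinal.{0} → Cardinal.{0}} (T : SPoset δ κf)

lemma skel_not_isolated (hbone : ∀ γ, γ + 1 < δ → T.BoneLevel γ)
    (x : SCarrier δ κf) (hx : x.1.1 ≠ 0) :
    ¬ ∃ U, T.topology.IsOpen U ∧ U ∩ Set.univ = {x} := by
  classical
  letI := T.topology
  rintro ⟨U, hU, hUx⟩
  rw [Set.inter_univ] at hUx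
  have hxU : x ∈ U := hUx ▸ rfl
  rcases Ordinal.zero_or_succ_or_isSuccLimit x.1.1 with h0 | ⟨γ, hγ⟩ | hlim
  · exact hx h0
  · -- successor level: limit of an injective sequence
    have hγ' : x.1.1 = γ + 1 := by rw [← hγ, Ordinal.add_one_eq_succ]
    have hb := hbone γ (hγ' ▸ x.2.1)
    obtain ⟨t, htinj, ht0, htend⟩ := skel_exists_tendsto T hb x hγ'
    have hev : ∀ᶠ n in Filter.atTop, t n ∈ U := htend ((show IsOpen U from hU).mem_nhds hxU)
    rw [Filter.eventually_atTop] at hev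
    obtain ⟨N, hN⟩ := hev
    have h1 : t N = x := by have := hN N le_rfl; rwa [hUx] at this
    have h2 : t (N + 1) = x := by have := hN (N + 1) (Nat.le_succ N); rwa [hUx] at this
    exact Nat.succ_ne_self N (htinj (h2.trans h1.symm))
  · -- limit level
    set β := x.1.1 with hβ
    have hbasis := TopologicalSpace.isTopologicalBasis_of_subbasis
      (show T.topology = TopologicalSpace.generateFrom
        {S | ∃ y, S = T.U y ∨ S = (T.U y)ᶜ} from rfl)
    obtain ⟨B, ⟨f, ⟨hffin, hfsub⟩, rfl⟩, hxB, hBU⟩ :=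
      hbasis.exists_subset_of_mem_open hxU hU
    have claim : ∀ S ∈ f, ∃ b, b < β ∧
        ∀ s : SCarrier δ κf, T.le s x → s ≠ x → b < s.1.1 → s ∈ S := by
      intro S hS
      have hxS : x ∈ S := hxB S hS
      obtain ⟨z, hz | hz⟩ := hfsub hS
      · subst hz
        exact ⟨0, hlim.pos, fun s hsx _ _ => T.le_trans _ _ _ hsx hxS⟩
      · subst hz
        have hxz : ¬ T.le x z := hxS
        have hxz' : x ≠ z := fun h => hxz (h ▸ T.le_refl x)
        obtain ⟨F, hF⟩ := T.inf x z hxz'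
        refine ⟨F.sup fun v => v.1.1, ?_, ?_⟩
        · rw [Finset.sup_lt_iff hlim.pos]
          intro v hv
          have hvv := (hF v).2 ⟨v, hv, T.le_refl v⟩
          have hvx : v ≠ x := fun h => hxz (h ▸ hvv.2)
          exact T.lt_levels v x hvv.1 hvx
        · intro s hsx hsne hbs hsz
          obtain ⟨v, hvF, hsv⟩ := (hF s).1 ⟨hsx, hsz⟩
          have h1 : s.1.1 ≤ v.1.1 := skel_level_le T hsv
          have h2 : v.1.1 ≤ F.sup fun v => v.1.1 := Finset.le_sup (f := fun v : SCarrier δ κf => v.1.1) hvF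
          exact absurd hbs (not_lt.2 (h1.trans h2))
    have hne : ∀ S : Set (SCarrier δ κf), ∃ b, S ∈ f →
        (b < β ∧ ∀ s : SCarrier δ κf, T.le s x → s ≠ x → b < s.1.1 → s ∈ S) := by
      intro S
      by_cases hS : S ∈ f
      · obtain ⟨b, hb⟩ := claim S hS
        exact ⟨b, fun _ => hb⟩
      · exact ⟨0, fun h => absurd h hS⟩
    choose b hb using hne
    have hBs : hffin.toFinset.sup b < β := by
      rw [Finset.sup_lt_iff hlim.pos]
      intro S hS
      exact (hb S (hffin.mem_toFinset.1 hS)).1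
    have hαβ : hffin.toFinset.sup b + 1 < β := by
      rw [Ordinal.add_one_eq_succ]; exact hlim.succ_lt hBs
    obtain ⟨s, hsl, hsx, hsne⟩ :=
      (T.pred_infinite (hffin.toFinset.sup b + 1) β hαβ x.2.1 x rfl).nonempty
    have hsB : s ∈ ⋂₀ f := by
      intro S hS
      refine (hb S hS).2 s hsx hsne ?_
      rw [hsl]
      calc b S ≤ hffin.toFinset.sup b := Finset.le_sup (hffin.mem_toFinset.2 hS)
        _ < hffin.toFinset.sup b + 1 := by
            rw [Ordinal.add_one_eq_succ]; exact Order.lt_succ _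
    have := hBU hsB
    rw [hUx] at this
    exact hsne this

lemma skel_card_level_zero_le :
    #({x : SCarrier δ κf | x.1.1 = 0}) ≤ Cardinal.lift.{1} (κf 0) := by
  have h : #(Set.Iio ((κf 0).ord)) = Cardinal.lift.{1} (κf 0) := by
    rw [Ordinal.mk_Iio_ordinal, Cardinal.card_ord]
  rw [← h]
  refine Cardinal.mk_le_of_injective
    (f := fun x => (⟨x.1.1.2, by
      have hh := x.1.2.2
      rw [show x.1.1.1 = 0 from x.2] at hh
      exact hh⟩ : Set.Iio ((κf 0).ord))) ?_
  intro a b hab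
  have h2 : a.1.1.2 = b.1.1.2 := congrArg Subtype.val hab
  have h1 : a.1.1.1 = b.1.1.1 := by rw [a.2, b.2]
  exact Subtype.ext (Subtype.ext (Prod.ext h1 h2))

end NotIso
lemma skel_main1 : ∀ (κ lam : Cardinal.{0}) (μ : Ordinal.{0}), ℵ₀ ≤ κ → κ < lam → 0 < μ →
    ∀ T : SPoset (μ + 1) (fun α => if α < μ then κ else lam),
      (∀ γ < μ, T.BoneLevel γ) →
      Cardinal.lift.{1} μ.card ≤
        #(CBDeriv _ T.topology 0 \ CBDeriv _ T.topology 1 : Set _) ^ (ℵ₀ : Cardinal.{1}) := by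
  intro κ lam μ hκ hkl hμ T hbone
  classical
  letI := T.topology
  haveI : T2Space (SCarrier (μ + 1) fun α => if α < μ then κ else lam) := skel_t2 T
  set D := CBDeriv _ T.topology 0 \ CBDeriv _ T.topology 1 with hD
  have hDiso : ∀ y : SCarrier (μ + 1) (fun α => if α < μ then κ else lam),
      y.1.1 = 0 → y ∈ D := by
    intro y hy
    rw [hD, skel_cb_diff]
    exact skel_isolated_of_level_zero T y hy
  have hptx : ∀ α : Set.Iio μ,
      ∃ x : SCarrier (μ + 1) (fun α => if α < μ then κ else lam), x.1.1 = α.1 + 1 := by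
    rintro ⟨α, hα⟩
    have h1 : α + 1 < μ + 1 := by
      rw [Ordinal.add_one_eq_succ, Ordinal.add_one_eq_succ, Order.succ_lt_succ_iff]
      exact hα
    have h2 : (0 : Ordinal) < ((fun α => if α < μ then κ else lam) (α + 1)).ord := by
      dsimp only
      have hpos : (0 : Cardinal) < if α + 1 < μ then κ else lam := by
        split
        · exact lt_of_lt_of_le Cardinal.aleph0_pos hκ
        · exact lt_of_lt_of_le Cardinal.aleph0_pos (hκ.trans hkl.le)
      rw [← Cardinal.ord_zero]
      exact Cardinal.ord_lt_ord.2 hpos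
    exact ⟨⟨(α + 1, 0), h1, h2⟩, rfl⟩
  choose x hx using hptx
  have hseq : ∀ α : Set.Iio μ,
      ∃ t : ℕ → SCarrier (μ + 1) (fun α => if α < μ then κ else lam),
        Function.Injective t ∧ (∀ n, (t n).1.1 = 0) ∧
        Filter.Tendsto t Filter.atTop (nhds (x α)) :=
    fun α => skel_exists_tendsto T (hbone α.1 α.2) (x α) (hx α)
  choose t htinj ht0 htend using hseq
  have Φinj : Function.Injective
      (fun α : Set.Iio μ => (fun n : ULift ℕ => (⟨t α n.down, hDiso _ (ht0 α n.down)⟩ : D))) := by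
    intro α β h
    have hts : t α = t β := by
      funext n
      exact congrArg Subtype.val (congrFun h (ULift.up n))
    have hxx : x α = x β := tendsto_nhds_unique (htend α) (hts ▸ htend β)
    have hlev : α.1 + 1 = β.1 + 1 := by rw [← hx α, ← hx β, hxx]
    rw [Ordinal.add_one_eq_succ, Ordinal.add_one_eq_succ] at hlev
    exact Subtype.ext (Order.succ_eq_succ_iff.1 hlev)
  calc Cardinal.lift.{1} μ.card = #(Set.Iio μ) := (Ordinal.mk_Iio_ordinal μ).symm
    _ ≤ #(ULift.{1} ℕ → D) := Cardinal.mk_le_of_injective Φinj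
    _ = #D ^ (ℵ₀ : Cardinal.{1}) := by
        rw [← Cardinal.power_def, Cardinal.mk_uLift, Cardinal.mk_nat, Cardinal.lift_aleph0]


/-- If `T` is a `μ`-skeleton (an `s`-poset for `s = ⟨κ⟩_μ ⌢ ⟨lam⟩` all of whose levels
below `μ` are bone levels), then `μ ≤ |I_0(X_T)|^ω`, where `I_0(X_T)` is the set of
isolated points of `X_T`. In particular, under CH a `⟨ω₁⟩_{ω₂} ⌢ ⟨lam⟩`-poset cannot
be an `ω₂`-skeleton. -/
theorem skeleton_card_le_isolated_pow_omega :
    (∀ (κ lam : Cardinal.{0}) (μ : Ordinal.{0}), ℵ₀ ≤ κ → κ < lam → 0 < μ →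
      ∀ T : SPoset (μ + 1) (fun α => if α < μ then κ else lam),
        (∀ γ < μ, T.BoneLevel γ) →
        Cardinal.lift.{1} μ.card ≤
          #(CBDeriv _ T.topology 0 \ CBDeriv _ T.topology 1 : Set _) ^ (ℵ₀ : Cardinal.{1}))
    ∧
    ((2 ^ (Cardinal.aleph 0) = Cardinal.aleph 1) →
      ∀ lam : Cardinal.{0}, Cardinal.aleph 1 < lam →
        ∀ T : SPoset ((Cardinal.aleph 2).ord + 1)
            (fun α => if α < (Cardinal.aleph 2).ord then Cardinal.aleph 1 else lam),
          ¬ (∀ γ < (Cardinal.aleph 2).ord, T.BoneLevel γ)) := by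
  refine ⟨skel_main1, ?_⟩
  intro hCH lam hlam T hbone
  have hμ0 : (0 : Ordinal.{0}) < ((Cardinal.aleph 2 : Cardinal.{0})).ord := by
    rw [← Cardinal.ord_zero]
    exact Cardinal.ord_lt_ord.2 (Cardinal.aleph_pos 2)
  have h1 := skel_main1 ((Cardinal.aleph 1 : Cardinal.{0})) lam ((Cardinal.aleph 2 : Cardinal.{0})).ord
    (Cardinal.aleph0_le_aleph 1) hlam hμ0 T hbone
  set D := CBDeriv _ T.topology 0 \ CBDeriv _ T.topology 1 with hD
  have hsub : D ⊆ {x | x.1.1 = 0} := by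
    intro y hy
    rw [hD, skel_cb_diff] at hy
    by_contra h
    exact skel_not_isolated T
      (fun γ hγ => hbone γ (by
        rwa [Ordinal.add_one_eq_succ, Ordinal.add_one_eq_succ, Order.succ_lt_succ_iff] at hγ))
      y h hy
  have hcard : #D ≤ Cardinal.lift.{1,0} ((Cardinal.aleph 1 : Cardinal.{0})) := by
    refine (Cardinal.mk_le_mk_of_subset hsub).trans ?_
    have h := skel_card_level_zero_le
      (κf := fun α => if α < ((Cardinal.aleph 2 : Cardinal.{0})).ord then (Cardinal.aleph 1 : Cardinal.{0}) else lam)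
      (δ := ((Cardinal.aleph 2 : Cardinal.{0})).ord + 1)
    refine h.trans (le_of_eq ?_)
    show Cardinal.lift.{1,0} (if (0:Ordinal.{0}) < (Cardinal.aleph 2 : Cardinal.{0}).ord then (Cardinal.aleph 1 : Cardinal.{0}) else lam) = _
    rw [if_pos hμ0]
  have hCH0 : (2 : Cardinal.{0}) ^ (Cardinal.aleph 0) = Cardinal.aleph 1 := by
    refine Cardinal.lift_injective ?_
    rw [Cardinal.lift_two_power, Cardinal.lift_aleph, Cardinal.lift_aleph,
      Ordinal.lift_zero, Ordinal.lift_one]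
    exact hCH
  have haleph : (Cardinal.aleph 1 : Cardinal.{0}) ^ (ℵ₀ : Cardinal.{0}) = (Cardinal.aleph 1 : Cardinal.{0}) := by
    conv_lhs => rw [← hCH0]
    rw [← Cardinal.power_mul, Cardinal.aleph_zero, Cardinal.aleph0_mul_aleph0,
      ← Cardinal.aleph_zero, hCH0]
  have hfin : Cardinal.lift.{1,0} ((Cardinal.aleph 2 : Cardinal.{0})) ≤ Cardinal.lift.{1,0} ((Cardinal.aleph 1 : Cardinal.{0})) := by
    have h2 : (((Cardinal.aleph 2 : Cardinal.{0})).ord).card = (Cardinal.aleph 2 : Cardinal.{0}) := Cardinal.card_ord _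
    rw [h2] at h1
    refine h1.trans ?_
    calc #D ^ (ℵ₀ : Cardinal.{1})
        ≤ Cardinal.lift.{1,0} ((Cardinal.aleph 1 : Cardinal.{0})) ^ (ℵ₀ : Cardinal.{1}) :=
          Cardinal.power_le_power_right hcard
      _ = Cardinal.lift.{1,0} ((Cardinal.aleph 1 : Cardinal.{0}) ^ (ℵ₀ : Cardinal.{0})) := by
          rw [Cardinal.lift_power, Cardinal.lift_aleph0]
      _ = Cardinal.lift.{1,0} ((Cardinal.aleph 1 : Cardinal.{0})) := by rw [haleph]
  have hle : ((Cardinal.aleph 2 : Cardinal.{0}) : Cardinal.{0}) ≤ (Cardinal.aleph 1 : Cardinal.{0}) := Cardinal.lift_le.1 hfin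
  exact absurd hle (not_le.2 (Cardinal.aleph_lt_aleph.2 (by norm_num)))
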